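/- Every consistent set of sentences over a signature α can be extended to a consistent set over the signature α* (obtained by adding countably many fresh constants) that has the ∀-property. -/

import Mathlib

/-- Terms: variables or constants. -/
inductive Tm (C : Type) : Type
  | var : ℕ → Tm C
  | const : C → Tm C
deriving DecidableEq

/-- Formulas of first-order coalition logic over a signature ⟨n, C, Ap⟩. -/
inductive Form (n : ℕ) (C : Type) (Ap : Type) : Type
  | atom : Ap → Form n C Ap
  | neg : Form n C Ap → Form n C Ap
  | and : Form n C Ap → Form n C Ap → Form n C Ap
  | box : (Fin n → Tm C) → Form n C Ap → Form n C Ap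
  | all : ℕ → Form n C Ap → Form n C Ap

namespace Form

variable {n : ℕ} {C Ap : Type}

def imp (φ ψ : Form n C Ap) : Form n C Ap := .neg (.and φ (.neg ψ))
def iff (φ ψ : Form n C Ap) : Form n C Ap := .and (imp φ ψ) (imp ψ φ)
def ex (x : ℕ) (φ : Form n C Ap) : Form n C Ap := .neg (.all x (.neg φ))

open Classical in
/-- Substitution of a term for a variable. -/
noncomputable def substT (t : Tm C) (x : ℕ) : Form n C Ap → Form n C Ap
  | .atom p => .atom p
  | .neg φ => .neg (substT t x φ)
  | .and φ ψ => .and (substT t x φ) (substT t x ψ)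
  | .box ts φ => .box (fun i => if ts i = .var x then t else ts i) (substT t x φ)
  | .all y φ => if y = x then .all y φ else .all y (substT t x φ)

/-- Substitution of a constant for a variable. -/
noncomputable def subst (a : C) (x : ℕ) (φ : Form n C Ap) : Form n C Ap := substT (.const a) x φ

/-- Free variables. -/
def FV : Form n C Ap → Finset ℕ
  | .atom _ => ∅
  | .neg φ => FV φ
  | .and φ ψ => FV φ ∪ FV ψ
  | .box ts φ => FV φ ∪ Finset.univ.biUnion (fun i => match ts i with | Tm.var x => {x} | _ => ∅)
  | .all y φ => FV φ \ {y}

/-- A sentence (closed formula). -/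
def closed (φ : Form n C Ap) : Prop := FV φ = ∅

/-- Universal closure of a formula. -/
def closure (φ : Form n C Ap) : Form n C Ap := ((FV φ).sort (· ≤ ·)).foldr Form.all φ

def size : Form n C Ap → ℕ
  | .atom _ => 1
  | .neg φ => size φ + 1
  | .and φ ψ => size φ + size ψ + 1
  | .box _ φ => size φ + 1
  | .all _ φ => size φ + 1

theorem size_substT (t : Tm C) (x : ℕ) (φ : Form n C Ap) :
    size (substT t x φ) = size φ := by
  induction φ with
  | atom p => rfl
  | neg φ ih => simp [substT, size, ih]
  | and φ ψ ih1 ih2 => simp [substT, size, ih1, ih2]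
  | box ts φ ih => simp [substT, size, ih]
  | all y φ ih => by_cases h : y = x <;> simp [substT, size, h, ih]

/-- Whether a term occurs in a formula. -/
def occursT (t : Tm C) : Form n C Ap → Prop
  | .atom _ => False
  | .neg φ => occursT t φ
  | .and φ ψ => occursT t φ ∨ occursT t ψ
  | .box ts φ => (∃ i, ts i = t) ∨ occursT t φ
  | .all y φ => (t = Tm.var y) ∨ occursT t φ

end Form

/-- A concurrent game structure over a signature ⟨n, C, Ap⟩ (actions = constants). -/
structure CGS (n : ℕ) (C : Type) (Ap : Type) where
  S : Type
  R : S → (Fin n → C) → S → Prop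
  V : Ap → S → Prop

namespace CGS

variable {n : ℕ} {C Ap : Type}

def Serial (G : CGS n C Ap) : Prop := ∀ s d, ∃ t, G.R s d t

def Functional (G : CGS n C Ap) : Prop := ∀ s d t v, G.R s d t → G.R s d v → t = v

end CGS

/-- Satisfaction of (closed) formulas in a CGS. -/
def Sat {n : ℕ} {C Ap : Type} (G : CGS n C Ap) : G.S → Form n C Ap → Prop
  | s, .atom p => G.V p s
  | s, .neg φ => ¬ Sat G s φ
  | s, .and φ ψ => Sat G s φ ∧ Sat G s ψ
  | s, .box ts φ => ∃ d : Fin n → C, (∀ i, ts i = Tm.const (d i)) ∧ ∃ t, G.R s d t ∧ Sat G t φ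
  | s, .all x φ => ∀ a : C, Sat G s (Form.subst a x φ)
termination_by _ φ => Form.size φ
decreasing_by all_goals simp [Form.subst, Form.size_substT, Form.size] <;> omega

/-- Truth of a possibly open formula: truth of its universal closure. -/
def SatC {n : ℕ} {C Ap : Type} (G : CGS n C Ap) (s : G.S) (φ : Form n C Ap) : Prop :=
  Sat G s (Form.closure φ)

/-- Validity in a CGS. -/
def ValidIn {n : ℕ} {C Ap : Type} (G : CGS n C Ap) (φ : Form n C Ap) : Prop :=
  ∀ s : G.S, SatC G s φ

/-- Propositional evaluation treating atoms, boxes and quantified formulas as atomic. -/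
def evalP {n : ℕ} {C Ap : Type} (v : Form n C Ap → Prop) : Form n C Ap → Prop
  | .neg φ => ¬ evalP v φ
  | .and φ ψ => evalP v φ ∧ evalP v ψ
  | .atom p => v (.atom p)
  | .box ts φ => v (.box ts φ)
  | .all x φ => v (.all x φ)

/-- Propositional tautologies. -/
def Taut {n : ℕ} {C Ap : Type} (φ : Form n C Ap) : Prop :=
  ∀ v : Form n C Ap → Prop, evalP v φ

/-- The axiom system of first-order coalition logic. -/
inductive Deriv {n : ℕ} {C Ap : Type} : Form n C Ap → Prop
  | PC {φ} : Taut φ → Deriv φ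
  | K (ts : Fin n → Tm C) (φ ψ) :
      Deriv (Form.iff (.and (.box ts φ) (.box ts ψ)) (.box ts (.and φ ψ)))
  | N (ts : Fin n → Tm C) (φ) :
      Deriv (Form.iff (.neg (.box ts φ)) (.box ts (.neg φ)))
  | E (x : ℕ) (t : Tm C) (φ) : Deriv (Form.imp (.all x φ) (Form.substT t x φ))
  | B (ts : Fin n → Tm C) (x : ℕ) (φ) (h : ∀ i, ts i ≠ Tm.var x) :
      Deriv (Form.imp (.all x (.box ts φ)) (.box ts (.all x φ)))
  | MP {φ ψ} : Deriv (Form.imp φ ψ) → Deriv φ → Deriv ψ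
  | Nec (ts : Fin n → Tm C) {φ} : Deriv φ → Deriv (.box ts φ)
  | Gen {φ ψ} (t : Tm C) (x : ℕ) :
      Deriv (Form.imp φ (Form.substT t x ψ)) → ¬ Form.occursT t φ →
      Deriv (Form.imp φ (.all x ψ))

/-- Derivability from a set of formulas. -/
def DerivFrom {n : ℕ} {C Ap : Type} (X : Set (Form n C Ap)) (φ : Form n C Ap) : Prop :=
  ∃ L : List (Form n C Ap), (∀ ψ ∈ L, ψ ∈ X) ∧ Deriv (L.foldr Form.imp φ)

def Consistent {n : ℕ} {C Ap : Type} (X : Set (Form n C Ap)) : Prop :=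
  ¬ ∃ φ, DerivFrom X φ ∧ DerivFrom X (.neg φ)

/-- A set of sentences. -/
def SentenceSet {n : ℕ} {C Ap : Type} (X : Set (Form n C Ap)) : Prop :=
  ∀ φ ∈ X, Form.closed φ

/-- Maximal consistent set (of sentences). -/
def MCS {n : ℕ} {C Ap : Type} (X : Set (Form n C Ap)) : Prop :=
  Consistent X ∧ ∀ ψ, Form.closed ψ → ψ ∉ X → ¬ Consistent (insert ψ X)

/-- The ∀-property. -/
def AllProp {n : ℕ} {C Ap : Type} (X : Set (Form n C Ap)) : Prop :=
  ∀ (φ : Form n C Ap) (x : ℕ), Form.FV φ ⊆ {x} →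
    ∃ a : C, Form.imp (Form.subst a x φ) (.all x φ) ∈ X

/-- The canonical model. -/
def canonical (n : ℕ) (C Ap : Type) : CGS n C Ap where
  S := {X : Set (Form n C Ap) // SentenceSet X ∧ MCS X ∧ AllProp X}
  R := fun X d Y => ∀ φ, φ ∈ Y.1 → Form.box (fun i => Tm.const (d i)) φ ∈ X.1
  V := fun p X => Form.atom p ∈ X.1

/-- Renaming of constants. -/
def Tm.mapC {C C' : Type} (f : C → C') : Tm C → Tm C'
  | .var x => .var x
  | .const c => .const (f c)

def Form.mapC {n : ℕ} {C C' Ap : Type} (f : C → C') : Form n C Ap → Form n C' Ap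
  | .atom p => .atom p
  | .neg φ => .neg (mapC f φ)
  | .and φ ψ => .and (mapC f φ) (mapC f ψ)
  | .box ts φ => .box (fun i => (ts i).mapC f) (mapC f φ)
  | .all y φ => .all y (mapC f φ)

/-! Henkin's construction. Enumerate all pairs `(φ, x)` of a formula over `α*` and a variable,
and add one at a time the witness axioms `φ[c/x] → ∀x φ`, each with a new constant `c` that does
not occur in the axioms added before. A step preserves consistency by rule `Gen`, applied to a
constant that does not occur in the premises, and the union of the increasing chain is consistent
since derivations are finite. At the start, `X` stays consistent over `α*` because renaming the
new constants to variables beyond those used in a derivation over `α*` gives a derivation over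
`α` of the renamed conclusion, which leaves formulas over `α` untouched. -/

instance {C : Type} [Countable C] : Countable (Tm C) := by
  refine Function.Injective.countable (f := fun t : Tm C => match t with
    | .var x => (Sum.inl x : ℕ ⊕ C) | .const c => Sum.inr c) ?_
  rintro (_ | _) (_ | _) h <;> simp_all

namespace Form

variable {n : ℕ} {C Ap : Type}

open Encodable in
noncomputable def code [Encodable (Fin n → Tm C)] [Encodable Ap] : Form n C Ap → ℕ
  | .atom p => Nat.pair 0 (encode p)
  | .neg φ => Nat.pair 1 φ.code
  | .and φ ψ => Nat.pair 2 (Nat.pair φ.code ψ.code)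
  | .box ts φ => Nat.pair 3 (Nat.pair (encode ts) φ.code)
  | .all y φ => Nat.pair 4 (Nat.pair y φ.code)

lemma code_injective [Encodable (Fin n → Tm C)] [Encodable Ap] :
    Function.Injective (code : Form n C Ap → ℕ) := by
  intro φ ψ h
  induction φ generalizing ψ <;> cases ψ <;> simp [code, Nat.pair_eq_pair] at h ⊢ <;> grind

instance [Countable C] [Countable Ap] : Countable (Form n C Ap) :=
  letI := Encodable.ofCountable (Fin n → Tm C)
  letI := Encodable.ofCountable Ap
  code_injective.countable

lemma finite_occursT (φ : Form n C Ap) : {t | occursT t φ}.Finite := by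
  induction φ with
  | atom p => simp [occursT]
  | neg φ ih => exact ih
  | and φ ψ ih₁ ih₂ => exact ih₁.union ih₂
  | box ts φ ih => exact (Set.finite_range ts).union ih
  | all y φ ih => exact ih.insert (Tm.var y)

lemma not_occursT_mapC_inl (m : ℕ) (φ : Form n C Ap) :
    ¬ occursT (.const (.inr m)) (φ.mapC Sum.inl : Form n (C ⊕ ℕ) Ap) := by
  induction φ with
  | atom p => exact id
  | neg φ ih => exact ih
  | and φ ψ ih₁ ih₂ => exact fun h => h.elim ih₁ ih₂
  | box ts φ ih =>
    rintro (⟨i, hi⟩ | h)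
    · cases hts : ts i <;> simp [hts, Tm.mapC] at hi
    · exact ih h
  | all y φ ih => rintro (h | h); exacts [by simp at h, ih h]

lemma exists_not_occursT_inr (L : List (Form n (C ⊕ ℕ) Ap)) :
    ∃ m : ℕ, ∀ ψ ∈ L, ¬ occursT (.const (.inr m)) ψ := by
  have hfin : (⋃ ψ ∈ L, (fun m : ℕ => Tm.const (Sum.inr m)) ⁻¹' {t | occursT t ψ}).Finite :=
    L.finite_toSet.biUnion fun ψ _ =>
      (finite_occursT ψ).preimage fun _ _ _ _ h => by simpa using h
  obtain ⟨m, hm⟩ := hfin.exists_notMem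
  exact ⟨m, fun ψ hψ h => hm (Set.mem_biUnion hψ h)⟩

end Form

section Derivability

variable {n : ℕ} {C Ap : Type} {X Y : Set (Form n C Ap)} {φ ψ θ : Form n C Ap}

lemma evalP_imp (v : Form n C Ap → Prop) (φ ψ : Form n C Ap) :
    evalP v (φ.imp ψ) ↔ (evalP v φ → evalP v ψ) := by
  simp [Form.imp, evalP]

lemma evalP_foldr_imp (v : Form n C Ap → Prop) (L : List (Form n C Ap)) (φ : Form n C Ap) :
    evalP v (L.foldr Form.imp φ) ↔ ((∀ ψ ∈ L, evalP v ψ) → evalP v φ) := by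
  induction L with
  | nil => simp
  | cons a L ih => simp [evalP_imp, ih]

namespace DerivFrom

lemma of_deriv (h : Deriv φ) : DerivFrom X φ := ⟨[], by simp, h⟩

lemma mono (hXY : X ⊆ Y) : DerivFrom X φ → DerivFrom Y φ
  | ⟨L, hL, hd⟩ => ⟨L, fun ψ hψ => hXY (hL ψ hψ), hd⟩

lemma mp (h₁ : DerivFrom X (φ.imp ψ)) (h₂ : DerivFrom X φ) : DerivFrom X ψ := by
  obtain ⟨L₁, hL₁, hd₁⟩ := h₁
  obtain ⟨L₂, hL₂, hd₂⟩ := h₂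
  refine ⟨L₁ ++ L₂, by simpa [or_imp, forall_and] using ⟨hL₁, hL₂⟩, ?_⟩
  have ht : Taut ((L₁.foldr Form.imp (φ.imp ψ)).imp
      ((L₂.foldr Form.imp φ).imp ((L₁ ++ L₂).foldr Form.imp ψ))) := by
    intro v
    simp only [evalP_imp, evalP_foldr_imp, List.mem_append, or_imp, forall_and]
    tauto
  exact ((Deriv.PC ht).MP hd₁).MP hd₂

lemma of_taut_imp (ht : Taut (φ.imp ψ)) (h : DerivFrom X φ) : DerivFrom X ψ :=
  (of_deriv (.PC ht)).mp h

lemma imp_of_insert (h : DerivFrom (insert θ X) φ) : DerivFrom X (θ.imp φ) := by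
  classical
  obtain ⟨L, hL, hd⟩ := h
  refine ⟨L.filter (· ≠ θ), fun ψ hψ => ?_, ?_⟩
  · simp only [List.mem_filter, decide_eq_true_eq] at hψ
    exact (hL ψ hψ.1).resolve_left hψ.2
  · have ht : Taut ((L.foldr Form.imp φ).imp ((L.filter (· ≠ θ)).foldr Form.imp (θ.imp φ))) := by
      intro v
      simp only [evalP_imp, evalP_foldr_imp, List.mem_filter, decide_eq_true_eq]
      intro h₁ h₂ hθ
      exact h₁ fun ψ hψ => if hψθ : ψ = θ then hψθ ▸ hθ else h₂ ψ ⟨hψ, hψθ⟩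
    exact (Deriv.PC ht).MP hd

lemma exists_of_iUnion {S : ℕ → Set (Form n C Ap)} (hS : Monotone S)
    (h : DerivFrom (⋃ k, S k) φ) : ∃ k, DerivFrom (S k) φ := by
  classical
  obtain ⟨L, hL, hd⟩ := h
  obtain ⟨k, hk⟩ := hS.directed_le.exists_mem_subset_of_finset_subset_biUnion
    (s := L.toFinset) fun ψ hψ => hL ψ (by simpa using hψ)
  exact ⟨k, L, fun ψ hψ => hk (by simpa using hψ), hd⟩

end DerivFrom

lemma derivFrom_neg_of_not_consistent_insert (h : ¬ Consistent (insert θ X)) :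
    DerivFrom X θ.neg := by
  obtain ⟨φ, h₁, h₂⟩ := not_not.1 h
  have ht : Taut ((θ.imp φ).imp ((θ.imp φ.neg).imp θ.neg)) := by
    intro v
    simp only [evalP_imp, evalP]
    tauto
  exact (h₁.imp_of_insert.of_taut_imp ht).mp h₂.imp_of_insert

lemma consistent_iUnion {S : ℕ → Set (Form n C Ap)} (hS : Monotone S)
    (h : ∀ k, Consistent (S k)) : Consistent (⋃ k, S k) := by
  rintro ⟨φ, h₁, h₂⟩
  obtain ⟨k₁, h₁⟩ := h₁.exists_of_iUnion hS
  obtain ⟨k₂, h₂⟩ := h₂.exists_of_iUnion hS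
  exact h (max k₁ k₂) ⟨φ, h₁.mono (hS (le_max_left ..)), h₂.mono (hS (le_max_right ..))⟩

end Derivability

namespace Form

variable {n : ℕ} {C Ap : Type}

def conj (p : Ap) (L : List (Form n C Ap)) : Form n C Ap :=
  L.foldr Form.and ((atom p).imp (atom p))

lemma evalP_conj (v : Form n C Ap → Prop) (p : Ap) (L : List (Form n C Ap)) :
    evalP v (conj p L) ↔ ∀ ψ ∈ L, evalP v ψ := by
  induction L with
  | nil => simp [conj, evalP_imp]
  | cons a L ih => simp [conj, evalP] at ih ⊢; tauto

lemma not_occursT_conj {t : Tm C} {p : Ap} {L : List (Form n C Ap)}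
    (h : ∀ ψ ∈ L, ¬ occursT t ψ) : ¬ occursT t (conj p L) := by
  induction L with
  | nil => simp [conj, imp, occursT]
  | cons a L ih => simpa [conj, occursT, not_or] using ⟨h a (by simp), ih (by simp_all)⟩

noncomputable def henkinAxiom (a : C) (x : ℕ) (φ : Form n C Ap) : Form n C Ap :=
  (subst a x φ).imp (all x φ)

end Form

section Generalization

variable {n : ℕ} {C Ap : Type} {X : Set (Form n C Ap)} {φ : Form n C Ap} {x : ℕ} {a : C}

/-- Rule `Gen` has a single premise, so the finitely many hypotheses used are conjoined first. -/
lemma DerivFrom.all_of_substT [Nonempty Ap] (hfresh : ∀ ψ ∈ X, ¬ Form.occursT (.const a) ψ)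
    (h : DerivFrom X (Form.substT (.const a) x φ)) : DerivFrom X (.all x φ) := by
  obtain ⟨L, hL, hd⟩ := h
  set p := Classical.arbitrary Ap
  have ht₁ : Taut ((L.foldr Form.imp (Form.substT (.const a) x φ)).imp
      ((Form.conj p L).imp (Form.substT (.const a) x φ))) := by
    intro v
    simp only [evalP_imp, evalP_foldr_imp, Form.evalP_conj]
    tauto
  have ht₂ : Taut (((Form.conj p L).imp (.all x φ)).imp (L.foldr Form.imp (.all x φ))) := by
    intro v
    simp only [evalP_imp, evalP_foldr_imp, Form.evalP_conj]
    tauto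
  have hgen : Deriv ((Form.conj p L).imp (.all x φ)) :=
    .Gen _ x ((Deriv.PC ht₁).MP hd) (Form.not_occursT_conj fun ψ hψ => hfresh ψ (hL ψ hψ))
  exact ⟨L, hL, (Deriv.PC ht₂).MP hgen⟩

lemma Consistent.insert_henkinAxiom [Nonempty Ap] (hX : Consistent X)
    (hfresh : ∀ ψ ∈ X, ¬ Form.occursT (.const a) ψ) :
    Consistent (insert (Form.henkinAxiom a x φ) X) := by
  by_contra hinc
  have hneg := derivFrom_neg_of_not_consistent_insert hinc
  have ht₁ : Taut ((Form.henkinAxiom a x φ).neg.imp (Form.subst a x φ)) := by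
    intro v
    simp only [Form.henkinAxiom, Form.imp, evalP]
    tauto
  have ht₂ : Taut ((Form.henkinAxiom a x φ).neg.imp (Form.all x φ).neg) := by
    intro v
    simp only [Form.henkinAxiom, Form.imp, evalP]
    tauto
  exact hX ⟨_, (hneg.of_taut_imp ht₁).all_of_substT hfresh, hneg.of_taut_imp ht₂⟩

end Generalization

namespace Tm

variable {C : Type}

/-- One more than the variable, so that `t.varBound ≤ k` says `t` is no variable `≥ k`. -/
def varBound : Tm C → ℕ
  | var x => x + 1
  | const _ => 0

def newConstToVar (k : ℕ) : Tm (C ⊕ ℕ) → Tm C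
  | var x => var x
  | const (.inl c) => const c
  | const (.inr m) => var (k + m)

lemma newConstToVar_eq_var_iff {k x : ℕ} (hx : x < k) (t : Tm (C ⊕ ℕ)) :
    t.newConstToVar k = var x ↔ t = var x := by
  rcases t with y | c | m <;> simp [newConstToVar]
  omega

lemma eq_of_newConstToVar_eq {k : ℕ} {t t' : Tm (C ⊕ ℕ)} (ht : t.varBound ≤ k)
    (ht' : t'.varBound ≤ k) (h : t.newConstToVar k = t'.newConstToVar k) : t = t' := by
  rcases t with y | c | m <;> rcases t' with y' | c' | m' <;>
    simp_all [newConstToVar, varBound]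
  omega

end Tm

namespace Form

variable {n : ℕ} {C Ap : Type}

def newConstToVar (k : ℕ) : Form n (C ⊕ ℕ) Ap → Form n C Ap
  | .atom p => .atom p
  | .neg φ => .neg (φ.newConstToVar k)
  | .and φ ψ => .and (φ.newConstToVar k) (ψ.newConstToVar k)
  | .box ts φ => .box (fun i => (ts i).newConstToVar k) (φ.newConstToVar k)
  | .all y φ => .all y (φ.newConstToVar k)

lemma newConstToVar_imp (k : ℕ) (φ ψ : Form n (C ⊕ ℕ) Ap) :
    (φ.imp ψ).newConstToVar k = (φ.newConstToVar k).imp (ψ.newConstToVar k) := rfl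

lemma newConstToVar_iff (k : ℕ) (φ ψ : Form n (C ⊕ ℕ) Ap) :
    (φ.iff ψ).newConstToVar k = (φ.newConstToVar k).iff (ψ.newConstToVar k) := rfl

lemma newConstToVar_foldr_imp (k : ℕ) (L : List (Form n (C ⊕ ℕ) Ap)) (φ : Form n (C ⊕ ℕ) Ap) :
    (L.foldr imp φ).newConstToVar k = (L.map (newConstToVar k)).foldr imp (φ.newConstToVar k) := by
  induction L with
  | nil => rfl
  | cons ψ L ih => simp [newConstToVar_imp, ih]

lemma newConstToVar_mapC_inl (k : ℕ) (φ : Form n C Ap) :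
    (φ.mapC Sum.inl).newConstToVar k = φ := by
  induction φ with
  | atom p => rfl
  | neg φ ih => simp [mapC, newConstToVar, ih]
  | and φ ψ ih₁ ih₂ => simp [mapC, newConstToVar, ih₁, ih₂]
  | box ts φ ih =>
    simp only [mapC, newConstToVar, ih, box.injEq, and_true]
    funext i
    cases ts i <;> rfl
  | all y φ ih => simp [mapC, newConstToVar, ih]

lemma evalP_newConstToVar (k : ℕ) (v : Form n C Ap → Prop) (φ : Form n (C ⊕ ℕ) Ap) :
    evalP v (φ.newConstToVar k) ↔ evalP (v ∘ newConstToVar k) φ := by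
  induction φ with
  | neg φ ih => simp [newConstToVar, evalP, ih]
  | and φ ψ ih₁ ih₂ => simp [newConstToVar, evalP, ih₁, ih₂]
  | _ => rfl

lemma substT_newConstToVar {k x : ℕ} (hx : x < k) (t : Tm (C ⊕ ℕ)) (φ : Form n (C ⊕ ℕ) Ap) :
    (substT t x φ).newConstToVar k = substT (t.newConstToVar k) x (φ.newConstToVar k) := by
  induction φ with
  | atom p => rfl
  | neg φ ih => simp [substT, newConstToVar, ih]
  | and φ ψ ih₁ ih₂ => simp [substT, newConstToVar, ih₁, ih₂]
  | box ts φ ih =>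
    simp only [substT, newConstToVar, ih, box.injEq, and_true]
    funext i
    split_ifs with h₁ h₂ h₂ <;> simp_all [Tm.newConstToVar_eq_var_iff hx]
  | all y φ ih => by_cases h : y = x <;> simp [substT, newConstToVar, h, ih]

lemma occursT_newConstToVar_iff (k : ℕ) (s : Tm C) (φ : Form n (C ⊕ ℕ) Ap) :
    occursT s (φ.newConstToVar k) ↔ ∃ t, occursT t φ ∧ t.newConstToVar k = s := by
  induction φ with
  | atom p => simp [newConstToVar, occursT]
  | neg φ ih => exact ih
  | and φ ψ ih₁ ih₂ => simp only [newConstToVar, occursT, ih₁, ih₂, ← exists_or, or_and_right]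
  | box ts φ ih => simp [newConstToVar, occursT, ih, or_and_right, exists_or]
  | all y φ ih =>
    simp [newConstToVar, occursT, ih, or_and_right, exists_or, Tm.newConstToVar, eq_comm]

end Form

lemma Taut.newConstToVar {n : ℕ} {C Ap : Type} {φ : Form n (C ⊕ ℕ) Ap} (h : Taut φ) (k : ℕ) :
    Taut (φ.newConstToVar k) :=
  fun v => (Form.evalP_newConstToVar k v φ).2 (h _)

section Conservativity

open Filter

variable {n : ℕ} {C Ap : Type}

theorem Deriv.eventually_newConstToVar {φ : Form n (C ⊕ ℕ) Ap} (h : Deriv φ) :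
    ∀ᶠ k in atTop, Deriv (φ.newConstToVar k) := by
  induction h with
  | PC h => exact .of_forall fun k => .PC (h.newConstToVar k)
  | K ts φ ψ => exact .of_forall fun k => .K _ _ _
  | N ts φ => exact .of_forall fun k => .N _ _
  | E x t φ =>
    filter_upwards [eventually_gt_atTop x] with k hx
    rw [Form.newConstToVar_imp, Form.substT_newConstToVar hx]
    exact .E _ _ _
  | B ts x φ hts =>
    filter_upwards [eventually_gt_atTop x] with k hx
    exact .B _ x _ fun i => (Tm.newConstToVar_eq_var_iff hx (ts i)).not.2 (hts i)
  | MP _ _ ih₁ ih₂ =>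
    filter_upwards [ih₁, ih₂] with k h₁ h₂
    exact h₁.MP h₂
  | Nec ts _ ih => exact ih.mono fun k => .Nec _
  | @Gen φ ψ t x _ hocc ih =>
    filter_upwards [ih, eventually_gt_atTop x, eventually_ge_atTop t.varBound,
      (Form.finite_occursT φ).eventually_all.2 fun t' _ => eventually_ge_atTop t'.varBound]
      with k hd hx ht hφ
    rw [Form.newConstToVar_imp, Form.substT_newConstToVar hx] at hd
    refine .Gen _ x hd fun hocc' => hocc ?_
    obtain ⟨t', ht', heq⟩ := (Form.occursT_newConstToVar_iff k _ φ).1 hocc'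
    exact Tm.eq_of_newConstToVar_eq (hφ t' ht') ht heq ▸ ht'

lemma Consistent.image_mapC_inl {X : Set (Form n C Ap)} (hX : Consistent X) :
    Consistent (Form.mapC Sum.inl '' X : Set (Form n (C ⊕ ℕ) Ap)) := by
  rintro ⟨φ, ⟨L₁, hL₁, hd₁⟩, ⟨L₂, hL₂, hd₂⟩⟩
  obtain ⟨k, hk₁, hk₂⟩ := (hd₁.eventually_newConstToVar.and hd₂.eventually_newConstToVar).exists
  have hmem : ∀ L : List (Form n (C ⊕ ℕ) Ap), (∀ ψ ∈ L, ψ ∈ Form.mapC Sum.inl '' X) →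
      ∀ ψ ∈ L.map (Form.newConstToVar k), ψ ∈ X := by
    simp only [List.mem_map]
    rintro L hL _ ⟨ψ, hψ, rfl⟩
    obtain ⟨χ, hχ, rfl⟩ := hL ψ hψ
    rwa [Form.newConstToVar_mapC_inl]
  rw [Form.newConstToVar_foldr_imp] at hk₁ hk₂
  exact hX ⟨_, ⟨_, hmem L₁ hL₁, hk₁⟩, ⟨_, hmem L₂ hL₂, hk₂⟩⟩

end Conservativity

namespace Form

variable {n : ℕ} {C Ap : Type}

lemma FV_substT_const (a : C) (x : ℕ) (φ : Form n C Ap) :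
    FV (substT (.const a) x φ) = FV φ \ {x} := by
  induction φ with
  | atom p => simp [substT, FV]
  | neg φ ih => simp [substT, FV, ih]
  | and φ ψ ih₁ ih₂ => simp [substT, FV, ih₁, ih₂, Finset.union_sdiff_distrib]
  | box ts φ ih =>
    simp only [substT, FV, ih, Finset.union_sdiff_distrib]
    congr 1
    ext y
    simp only [Finset.mem_biUnion, Finset.mem_univ, true_and, Finset.mem_sdiff,
      Finset.mem_singleton, ← exists_and_right]
    refine exists_congr fun i => ?_
    split_ifs with h <;> rcases hts : ts i with z | c <;> simp_all
  | all y φ ih =>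
    by_cases h : y = x
    · simp [substT, FV, h]
    · simp only [substT, h, if_false, FV, ih]
      grind

lemma FV_mapC {C' : Type} (f : C → C') (φ : Form n C Ap) : FV (φ.mapC f) = FV φ := by
  induction φ with
  | atom p => rfl
  | neg φ ih => simp [mapC, FV, ih]
  | and φ ψ ih₁ ih₂ => simp [mapC, FV, ih₁, ih₂]
  | box ts φ ih =>
    simp only [mapC, FV, ih]
    congr 1
    refine Finset.biUnion_congr rfl fun i _ => ?_
    cases ts i <;> rfl
  | all y φ ih => simp [mapC, FV, ih]

lemma closed_henkinAxiom {φ : Form n C Ap} {x : ℕ} (h : FV φ ⊆ {x}) (a : C) :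
    closed (henkinAxiom a x φ) := by
  simp [closed, henkinAxiom, imp, subst, FV, FV_substT_const, Finset.sdiff_eq_empty_iff_subset, h]

end Form

section Henkin

variable {n : ℕ} {C Ap : Type}

noncomputable def freshIndex (L : List (Form n (C ⊕ ℕ) Ap)) : ℕ :=
  (Form.exists_not_occursT_inr L).choose

lemma not_occursT_freshIndex {L : List (Form n (C ⊕ ℕ) Ap)} {ψ : Form n (C ⊕ ℕ) Ap}
    (hψ : ψ ∈ L) : ¬ Form.occursT (.const (.inr (freshIndex L))) ψ :=
  (Form.exists_not_occursT_inr L).choose_spec ψ hψ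

noncomputable def henkinAxioms (e : ℕ → Form n (C ⊕ ℕ) Ap × ℕ) : ℕ → List (Form n (C ⊕ ℕ) Ap)
  | 0 => []
  | k + 1 =>
    let L := henkinAxioms e k
    if Form.FV (e k).1 ⊆ {(e k).2} then
      Form.henkinAxiom (.inr (freshIndex L)) (e k).2 (e k).1 :: L
    else L

def henkinStage (X : Set (Form n C Ap)) (e : ℕ → Form n (C ⊕ ℕ) Ap × ℕ) (k : ℕ) :
    Set (Form n (C ⊕ ℕ) Ap) :=
  Form.mapC Sum.inl '' X ∪ {ψ | ψ ∈ henkinAxioms e k}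

variable {X : Set (Form n C Ap)} {e : ℕ → Form n (C ⊕ ℕ) Ap × ℕ}

lemma henkinStage_mono : Monotone (henkinStage X e) := by
  refine monotone_nat_of_le_succ fun k => Set.union_subset_union_right _ fun ψ hψ => ?_
  simp only [henkinAxioms, Set.mem_ofPred_eq] at hψ ⊢
  split_ifs <;> simp [hψ]

lemma sentenceSet_henkinStage (hX : SentenceSet X) (k : ℕ) : SentenceSet (henkinStage X e k) := by
  rintro ψ (⟨χ, hχ, rfl⟩ | hψ)
  · simpa [Form.closed, Form.FV_mapC] using hX χ hχ
  · induction k with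
    | zero => simp [henkinAxioms] at hψ
    | succ k ih =>
      simp only [henkinAxioms, Set.mem_ofPred_eq] at hψ ih
      split_ifs at hψ with hFV
      · rcases List.mem_cons.1 hψ with rfl | hψ
        exacts [Form.closed_henkinAxiom hFV _, ih hψ]
      · exact ih hψ

lemma consistent_henkinStage [Nonempty Ap] (hX : Consistent X) (k : ℕ) :
    Consistent (henkinStage X e k) := by
  induction k with
  | zero =>
    simpa only [henkinStage, henkinAxioms, List.not_mem_nil, Set.ofPred_false, Set.union_empty]
      using hX.image_mapC_inl
  | succ k ih =>
    have hfresh : ∀ ψ ∈ henkinStage X e k,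
        ¬ Form.occursT (.const (.inr (freshIndex (henkinAxioms e k)))) ψ := by
      rintro ψ (⟨χ, -, rfl⟩ | hψ)
      exacts [Form.not_occursT_mapC_inl _ χ, not_occursT_freshIndex hψ]
    have hstep : henkinStage X e (k + 1) = if Form.FV (e k).1 ⊆ {(e k).2} then
        insert (Form.henkinAxiom (.inr (freshIndex (henkinAxioms e k))) (e k).2 (e k).1)
          (henkinStage X e k) else henkinStage X e k := by
      simp only [henkinStage, henkinAxioms]
      split_ifs <;> ext <;> simp [or_left_comm]
    rw [hstep]
    split_ifs
    exacts [ih.insert_henkinAxiom hfresh, ih]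

lemma AllProp.iUnion_henkinStage (he : Function.Surjective e) :
    AllProp (⋃ k, henkinStage X e k) := by
  intro φ x hFV
  obtain ⟨k, hk⟩ := he (φ, x)
  refine ⟨Sum.inr (freshIndex (henkinAxioms e k)), Set.mem_iUnion.2 ⟨k + 1, .inr ?_⟩⟩
  simp [henkinAxioms, hk, hFV, Form.henkinAxiom]

end Henkin

theorem extend_forall_property_general {n : ℕ} {C Ap : Type}
    [Countable C] [Countable Ap] [Nonempty Ap]
    (X : Set (Form n C Ap)) (hX : SentenceSet X) (hcons : Consistent X) :
    ∃ Y : Set (Form n (C ⊕ ℕ) Ap), SentenceSet Y ∧ Consistent Y ∧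
      Form.mapC Sum.inl '' X ⊆ Y ∧ AllProp Y := by
  have : Nonempty (Form n (C ⊕ ℕ) Ap) := ⟨.atom (Classical.arbitrary Ap)⟩
  obtain ⟨e, he⟩ := exists_surjective_nat (Form n (C ⊕ ℕ) Ap × ℕ)
  refine ⟨⋃ k, henkinStage X e k, ?_, consistent_iUnion henkinStage_mono
    (consistent_henkinStage hcons), Set.subset_iUnion_of_subset 0 Set.subset_union_left,
    .iUnion_henkinStage he⟩
  rintro ψ ⟨_, ⟨k, rfl⟩, hψ⟩
  exact sentenceSet_henkinStage hX k ψ hψ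

/-- every consistent set of sentences over α extends to a consistent set
over α* (with countably many fresh constants) having the ∀-property. -/
theorem extend_forall_property {n : ℕ} {C Ap : Type}
    [Countable C] [Nonempty C] [Countable Ap] [Nonempty Ap]
    (X : Set (Form n C Ap)) (hX : SentenceSet X) (hcons : Consistent X) :
    ∃ Y : Set (Form n (C ⊕ ℕ) Ap), SentenceSet Y ∧ Consistent Y ∧
      Form.mapC Sum.inl '' X ⊆ Y ∧ AllProp Y :=
  extend_forall_property_general X hX hcons
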